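/- arXiv:2410.11047 — 6 statements merged into one kernel-verified Lean document; each statement's English description precedes it below -/
import Mathlib

section
/- The Schützenberger map θ descends to a well-defined anti-automorphism of the plactic monoid of rank n: if two words over {1,…,n} are Knuth-equivalent, then their images under θ are Knuth-equivalent. -/
/-- The Knuth relations on words over the alphabet `Fin n`:
`xzy = zxy` for `x ≤ y < z` and `yxz = yzx` for `x < y ≤ z`. -/
def KnuthRel (n : ℕ) : FreeMonoid (Fin n) → FreeMonoid (Fin n) → Prop := fun a b =>
  (∃ x y z : Fin n, x ≤ y ∧ y < z ∧
      a = FreeMonoid.of x * FreeMonoid.of z * FreeMonoid.of y ∧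
      b = FreeMonoid.of z * FreeMonoid.of x * FreeMonoid.of y) ∨
  (∃ x y z : Fin n, x < y ∧ y ≤ z ∧
      a = FreeMonoid.of y * FreeMonoid.of x * FreeMonoid.of z ∧
      b = FreeMonoid.of y * FreeMonoid.of z * FreeMonoid.of x)

/-- The plactic monoid of rank `n`, presented by generators `Fin n` and the
Knuth relations. -/
def Plactic (n : ℕ) := (conGen (KnuthRel n)).Quotient

instance (n : ℕ) : Monoid (Plactic n) :=
  inferInstanceAs (Monoid (conGen (KnuthRel n)).Quotient)

/-- The canonical projection from the free monoid to the plactic monoid. -/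
def Plactic.mk (n : ℕ) : FreeMonoid (Fin n) →* Plactic n := Con.mk' _

/-!
Reversing a word and mirroring its letters is an anti-automorphism of the free monoid, and it
swaps the two families of Knuth relations: since `Fin.rev` reverses the order, the relation
`xzy = zxy` (`x ≤ y < z`) becomes `y'z'x' = y'x'z'` with `z' < y' ≤ x'`, an instance of the
second family, and symmetrically. An anti-homomorphism carrying generating relations into
generating relations carries the generated congruence into the generated congruence.
-/

theorem conGen_map_of_antimul {M N : Type*} [Mul M] [Mul N] {r : M → M → Prop}
    {s : N → N → Prop} (f : M → N) (map_mul_rev : ∀ a b, f (a * b) = f b * f a)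
    (map_rel : ∀ a b, r a b → s (f a) (f b)) {a b : M} (h : conGen r a b) :
    conGen s (f a) (f b) := by
  induction h with
  | of a b hab => exact .of _ _ (map_rel a b hab)
  | refl a => exact .refl _
  | symm _ ih => exact .symm ih
  | trans _ _ ih₁ ih₂ => exact .trans ih₁ ih₂
  | mul _ _ ih₁ ih₂ =>
    rw [map_mul_rev, map_mul_rev]
    exact .mul ih₂ ih₁

def schutzenberger (n : ℕ) (w : FreeMonoid (Fin n)) : FreeMonoid (Fin n) :=
  (FreeMonoid.map Fin.rev w).reverse

theorem schutzenberger_mul (n : ℕ) (a b : FreeMonoid (Fin n)) :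
    schutzenberger n (a * b) = schutzenberger n b * schutzenberger n a := by
  simp only [schutzenberger, map_mul, FreeMonoid.reverse_mul]

theorem schutzenberger_of_mul_of_mul_of (n : ℕ) (x y z : Fin n) :
    schutzenberger n (.of x * .of y * .of z) = .of z.rev * .of y.rev * .of x.rev :=
  rfl

theorem knuthRel_schutzenberger (n : ℕ) (a b : FreeMonoid (Fin n)) (h : KnuthRel n a b) :
    KnuthRel n (schutzenberger n a) (schutzenberger n b) := by
  rcases h with ⟨x, y, z, hxy, hyz, rfl, rfl⟩ | ⟨x, y, z, hxy, hyz, rfl, rfl⟩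
  · simp only [schutzenberger_of_mul_of_mul_of]
    exact .inr ⟨z.rev, y.rev, x.rev, Fin.rev_lt_rev.2 hyz, Fin.rev_le_rev.2 hxy, rfl, rfl⟩
  · simp only [schutzenberger_of_mul_of_mul_of]
    exact .inl ⟨z.rev, y.rev, x.rev, Fin.rev_le_rev.2 hyz, Fin.rev_lt_rev.2 hxy, rfl, rfl⟩

/-- If two words over `{1,…,n}` are Knuth-equivalent, then their images under the
Schützenberger map (reverse and replace each letter by its mirror) are
Knuth-equivalent; hence the map descends to an anti-automorphism of `Plactic n`. -/
theorem schutzenberger_descends (n : ℕ) (a b : FreeMonoid (Fin n))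
    (h : conGen (KnuthRel n) a b) :
    conGen (KnuthRel n)
      (FreeMonoid.ofList ((FreeMonoid.toList a).map Fin.rev).reverse)
      (FreeMonoid.ofList ((FreeMonoid.toList b).map Fin.rev).reverse) :=
  conGen_map_of_antimul (schutzenberger n) (schutzenberger_mul n) (knuthRel_schutzenberger n) h
end

section
/- For any u, v in the plactic monoid P_n of rank n with equal content, there exists X ∈ P_n such that Xu = Xv. -/
theorem List.exists_eq_append_cons_of_pairwise {α : Type*} [PartialOrder α] {x z : α}
    (hxz : x < z) {r : List α} (hr : r.Pairwise (· ≤ ·)) (hz : z ∈ r)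
    (hgap : ∀ a ∈ r, a ≤ x ∨ z ≤ a) :
    ∃ A B, r = A ++ z :: B ∧ (∀ a ∈ A, a ≤ x) ∧ ∀ b ∈ B, z ≤ b := by
  induction r with
  | nil => simp at hz
  | cons c r ih =>
    obtain ⟨hcr, hr⟩ := List.pairwise_cons.1 hr
    by_cases hcx : c ≤ x
    · have hzr : z ∈ r := (List.mem_cons.1 hz).resolve_left fun h => (h ▸ hxz).not_ge hcx
      obtain ⟨A, B, rfl, hAx, hzB⟩ := ih hr hzr fun a ha => hgap a (List.mem_cons_of_mem _ ha)
      exact ⟨c :: A, B, rfl, List.forall_mem_cons.2 ⟨hcx, hAx⟩, hzB⟩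
    · have hzc : z ≤ c := (hgap c List.mem_cons_self).resolve_left hcx
      have hcz : c ≤ z := by
        rcases List.mem_cons.1 hz with rfl | h
        exacts [le_rfl, hcr z h]
      obtain rfl := le_antisymm hcz hzc
      exact ⟨[], r, rfl, by simp, hcr⟩

namespace Plactic

variable {n : ℕ}

def ofList (l : List (Fin n)) : Plactic n := Plactic.mk n (FreeMonoid.ofList l)

@[simp]
theorem ofList_append (l₁ l₂ : List (Fin n)) : ofList (l₁ ++ l₂) = ofList l₁ * ofList l₂ := by
  rw [ofList, FreeMonoid.ofList_append, map_mul]; rfl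

theorem ofList_toList (u : FreeMonoid (Fin n)) : ofList u.toList = Plactic.mk n u := by
  rw [ofList, FreeMonoid.ofList_toList]

theorem ofList_knuth_xzy {x y z : Fin n} (hxy : x ≤ y) (hyz : y < z) (p q : List (Fin n)) :
    ofList (p ++ x :: z :: y :: q) = ofList (p ++ z :: x :: y :: q) := by
  have h : ofList [x, z, y] = ofList [z, x, y] :=
    (Con.eq _).2 (ConGen.Rel.of _ _ (Or.inl ⟨x, y, z, hxy, hyz, rfl, rfl⟩))
  change ofList (p ++ ([x, z, y] ++ q)) = ofList (p ++ ([z, x, y] ++ q))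
  simp only [ofList_append, h]

theorem ofList_knuth_yxz {x y z : Fin n} (hxy : x < y) (hyz : y ≤ z) (p q : List (Fin n)) :
    ofList (p ++ y :: x :: z :: q) = ofList (p ++ y :: z :: x :: q) := by
  have h : ofList [y, x, z] = ofList [y, z, x] :=
    (Con.eq _).2 (ConGen.Rel.of _ _ (Or.inr ⟨x, y, z, hxy, hyz, rfl, rfl⟩))
  change ofList (p ++ ([y, x, z] ++ q)) = ofList (p ++ ([y, z, x] ++ q))
  simp only [ofList_append, h]

theorem ofList_cons_append_singleton_of_lt {x z : Fin n} (hxz : x < z) {B : List (Fin n)}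
    (hB : B.Pairwise (· ≤ ·)) (hzB : ∀ b ∈ B, z ≤ b) :
    ofList (z :: (B ++ [x])) = ofList (z :: x :: B) := by
  induction B generalizing z with
  | nil => rfl
  | cons b B ih =>
    obtain ⟨hbB, hB⟩ := List.pairwise_cons.1 hB
    have hzb : z ≤ b := hzB b List.mem_cons_self
    calc ofList (z :: b :: (B ++ [x]))
        = ofList [z] * ofList (b :: (B ++ [x])) := ofList_append [z] _
      _ = ofList ([] ++ z :: b :: x :: B) := by rw [ih (hxz.trans_le hzb) hB hbB]; rfl
      _ = ofList (z :: x :: b :: B) := (ofList_knuth_yxz hxz hzb [] B).symm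

theorem ofList_append_cons_cons_of_lt {y z : Fin n} (hyz : y < z) {A : List (Fin n)}
    (hA : A.Pairwise (· ≤ ·)) (hAy : ∀ a ∈ A, a ≤ y) (t : List (Fin n)) :
    ofList (A ++ z :: y :: t) = ofList (z :: (A ++ y :: t)) := by
  induction A using List.reverseRecOn generalizing y t with
  | nil => rfl
  | append_singleton A a ih =>
    obtain ⟨hA, -, hAa⟩ := List.pairwise_append.1 hA
    have hay : a ≤ y := hAy a (by simp)
    calc ofList (A ++ [a] ++ z :: y :: t)
        = ofList (A ++ z :: a :: y :: t) := by simpa using ofList_knuth_xzy hay hyz A t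
      _ = ofList (z :: (A ++ [a] ++ y :: t)) := by
        simpa using ih (hay.trans_lt hyz) hA (fun b hb => hAa b hb a (by simp)) (y :: t)

theorem ofList_append_cons_append_singleton {x z : Fin n} (hxz : x < z) {A B : List (Fin n)}
    (hA : A.Pairwise (· ≤ ·)) (hAx : ∀ a ∈ A, a ≤ x)
    (hB : B.Pairwise (· ≤ ·)) (hzB : ∀ b ∈ B, z ≤ b) :
    ofList (A ++ z :: B ++ [x]) = ofList (z :: (A ++ x :: B)) := by
  rw [List.append_assoc, List.cons_append, ofList_append,
    ofList_cons_append_singleton_of_lt hxz hB hzB, ← ofList_append]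
  exact ofList_append_cons_cons_of_lt hxz hA hAx B

-- Schensted row insertion of `x` into the row `r`, bumping `z`, the least letter of `r` above `x`.
theorem ofList_append_singleton_eq_cons {x z : Fin n} (hxz : x < z) {r r' : List (Fin n)}
    (hr : r.Pairwise (· ≤ ·)) (hz : z ∈ r) (hgap : ∀ a ∈ r, a ≤ x ∨ z ≤ a)
    (hr' : r'.Pairwise (· ≤ ·)) (hperm : r'.Perm (x :: r.erase z)) :
    ofList (r ++ [x]) = ofList (z :: r') := by
  obtain ⟨A, B, rfl, hAx, hzB⟩ := List.exists_eq_append_cons_of_pairwise hxz hr hz hgap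
  obtain ⟨hA, hzB_sorted, -⟩ := List.pairwise_append.1 hr
  have hB := (List.pairwise_cons.1 hzB_sorted).2
  have hzA : z ∉ A := fun h => (hAx z h).not_gt hxz
  have hsorted : (A ++ x :: B).Pairwise (· ≤ ·) := by
    refine List.pairwise_append.2 ⟨hA, List.pairwise_cons.2 ⟨?_, hB⟩, ?_⟩
    · exact fun b hb => hxz.le.trans (hzB b hb)
    · intro a ha b hb
      rcases List.mem_cons.1 hb with rfl | hb
      exacts [hAx a ha, (hAx a ha).trans (hxz.le.trans (hzB b hb))]
  have hr'_eq : r' = A ++ x :: B := by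
    refine List.Perm.eq_of_pairwise' hr' hsorted (hperm.trans ?_)
    rw [List.erase_append_right _ hzA, List.erase_cons_head]
    exact List.perm_middle.symm
  rw [hr'_eq]
  exact ofList_append_cons_append_singleton hxz hA hAx hB hzB

def rowWord (c : Fin n → ℕ) : List (Fin n) :=
  (List.finRange n).flatMap fun a => List.replicate (c a) a

theorem count_rowWord (c : Fin n → ℕ) (a : Fin n) : (rowWord c).count a = c a := by
  simp [rowWord, List.count_flatMap, List.count_replicate, Function.comp_def, ← Fin.sum_univ_def]

theorem pairwise_rowWord (c : Fin n → ℕ) : (rowWord c).Pairwise (· ≤ ·) := by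
  refine List.pairwise_flatMap.2 ⟨fun a _ => ?_, (List.pairwise_lt_finRange n).imp ?_⟩
  · exact List.pairwise_replicate.2 (Or.inr le_rfl)
  · intro a b hab x hx y hy
    rw [List.eq_of_mem_replicate hx, List.eq_of_mem_replicate hy]
    exact hab.le

theorem eq_rowWord_of_pairwise {l : List (Fin n)} {c : Fin n → ℕ} (hl : l.Pairwise (· ≤ ·))
    (hc : ∀ a, l.count a = c a) : l = rowWord c :=
  List.Perm.eq_of_pairwise' hl (pairwise_rowWord c)
    (List.perm_iff_count.2 fun a => by rw [hc, count_rowWord])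

theorem rowWord_append_singleton {c c' : Fin n → ℕ} {x : Fin n} (hx : ∀ a, a ≤ x)
    (hc' : ∀ a, c' a = c a + if a = x then 1 else 0) : rowWord c ++ [x] = rowWord c' := by
  refine eq_rowWord_of_pairwise ?_ fun a => ?_
  · exact List.pairwise_append.2 ⟨pairwise_rowWord c, by simp, fun a _ b hb => by
      rw [List.mem_singleton.1 hb]; exact hx a⟩
  · rw [List.count_append, count_rowWord, hc', List.count_singleton]
    simp only [beq_iff_eq, @eq_comm _ x a]

theorem ofList_rowWord_append_singleton {c c' : Fin n → ℕ} {x z : Fin n} (hxz : x < z)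
    (hgap : ∀ a, x < a → z ≤ a) (hz : c z ≠ 0)
    (hc' : ∀ a, c' a + (if a = z then 1 else 0) = c a + if a = x then 1 else 0) :
    ofList (rowWord c ++ [x]) = ofList (z :: rowWord c') := by
  refine ofList_append_singleton_eq_cons hxz (pairwise_rowWord c) ?_ ?_ (pairwise_rowWord c') ?_
  · rw [← List.count_pos_iff, count_rowWord]
    exact Nat.pos_of_ne_zero hz
  · exact fun a _ => (le_or_gt a x).imp_right (hgap a)
  · refine List.perm_iff_count.2 fun a => ?_
    have h := hc' a
    simp only [count_rowWord, List.count_cons, List.count_erase, beq_iff_eq]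
    split_ifs at h ⊢ <;> subst_vars <;> omega

/- Row `i` after inserting `w` into the array with `N` copies of every letter in each row: every
letter `k` of `w` adds a `k + i` to row `i` and bumps a `k + i + 1` out of it. The truncated
subtraction is harmless as long as `w.length < N`. -/
def fatRow (N : ℕ) (w : List (Fin n)) (i : ℕ) : List (Fin n) :=
  rowWord fun a =>
    N + w.countP (fun k => k.val + i = a.val) - w.countP (fun k => k.val + i + 1 = a.val)

-- The reading word of rows `i - 1, …, 0`; the rows need not form a semistandard tableau.
def fatTableau (N : ℕ) (w : List (Fin n)) : ℕ → List (Fin n)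
  | 0 => []
  | i + 1 => fatRow N w i ++ fatTableau N w i

theorem fatRow_append_singleton_of_le {N i : ℕ} (w : List (Fin n)) {k : Fin n}
    (hki : n ≤ k + i) : fatRow N (w ++ [k]) i = fatRow N w i := by
  unfold fatRow
  congr 1
  funext a
  have := a.isLt
  simp only [List.countP_append, List.countP_singleton, decide_eq_true_eq]
  rw [if_neg (by omega), if_neg (by omega)]
  rfl

theorem fatRow_append_singleton_of_add_one_eq {N i : ℕ} {w : List (Fin n)} (hw : w.length < N)
    {k : Fin n} (hki : k + i + 1 = n) :
    fatRow N w i ++ [⟨k + i, by omega⟩] = fatRow N (w ++ [k]) i := by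
  refine rowWord_append_singleton (fun a => Fin.le_def.2 (by simp; omega)) fun a => ?_
  have := a.isLt
  have : w.countP (fun k => k.val + i + 1 = a.val) < N := List.countP_le_length.trans_lt hw
  simp only [List.countP_append, List.countP_singleton, decide_eq_true_eq, Fin.ext_iff]
  split_ifs <;> omega

theorem ofList_fatRow_append_singleton {N i : ℕ} {w : List (Fin n)} (hw : w.length < N)
    {k : Fin n} (hki : k + i + 1 < n) :
    ofList (fatRow N w i ++ [⟨k + i, by omega⟩]) =
      ofList (⟨k + i + 1, hki⟩ :: fatRow N (w ++ [k]) i) := by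
  have hlt : ∀ a : Fin n, w.countP (fun k => k.val + i + 1 = a.val) < N :=
    fun a => List.countP_le_length.trans_lt hw
  refine ofList_rowWord_append_singleton (Fin.lt_def.2 (by simp)) (fun a ha => ?_) ?_ fun a => ?_
  · rw [Fin.lt_def] at ha
    exact Fin.le_def.2 (by simp; omega)
  · have := hlt ⟨k + i + 1, hki⟩
    omega
  · have := hlt a
    simp only [List.countP_append, List.countP_singleton, decide_eq_true_eq, Fin.ext_iff]
    split_ifs <;> omega

theorem ofList_fatTableau_append_singleton {N : ℕ} {w : List (Fin n)} (hw : w.length < N)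
    (k : Fin n) (i : ℕ) :
    ofList (fatTableau N w i ++ [k]) =
      ofList ((if h : k + i < n then [⟨k + i, h⟩] else []) ++ fatTableau N (w ++ [k]) i) := by
  induction i with
  | zero => simp [fatTableau]
  | succ i ih =>
    have hrow : ofList (fatTableau N w (i + 1) ++ [k]) = ofList (fatRow N w i ++
        (if h : k + i < n then [⟨k + i, h⟩] else []) ++ fatTableau N (w ++ [k]) i) := by
      rw [fatTableau, List.append_assoc, ofList_append, ih, ← ofList_append, List.append_assoc]
    rw [hrow]
    rcases lt_trichotomy (k + i + 1) n with h | h | h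
    · rw [dif_pos (show k + i < n by omega), dif_pos (show k + (i + 1) < n by omega),
        ofList_append (fatRow N w i ++ _), ofList_fatRow_append_singleton hw h]
      rfl
    · rw [dif_pos (show k + i < n by omega), dif_neg (show ¬k + (i + 1) < n by omega),
        fatRow_append_singleton_of_add_one_eq hw h]
      rfl
    · rw [dif_neg (show ¬k + i < n by omega), dif_neg (show ¬k + (i + 1) < n by omega),
        List.append_nil, ← fatRow_append_singleton_of_le w (show n ≤ k + i by omega)]
      rfl

theorem ofList_fatTableau_nil_append {N : ℕ} {w : List (Fin n)} (hw : w.length < N) :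
    ofList (fatTableau N [] n ++ w) = ofList (fatTableau N w n) := by
  induction w using List.reverseRecOn with
  | nil => simp
  | append_singleton w k ih =>
    rw [List.length_append, List.length_singleton] at hw
    rw [← List.append_assoc, ofList_append, ih (by omega), ← ofList_append,
      ofList_fatTableau_append_singleton (by omega), dif_neg (by omega), List.nil_append]

theorem fatTableau_eq_of_perm {N : ℕ} {u v : List (Fin n)} (h : u.Perm v) (i : ℕ) :
    fatTableau N u i = fatTableau N v i := by
  induction i with
  | zero => rfl
  | succ i ih => simp only [fatTableau, fatRow, h.countP_eq, ih]

end Plactic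

/-- For any `u, v` in the plactic monoid of rank `n` with equal content, there
exists `X` with `X * u = X * v`. -/
theorem plactic_eq_content_imp_common_left_annihilator (n : ℕ) (u v : FreeMonoid (Fin n))
    (h : ∀ k : Fin n, (FreeMonoid.toList u).count k = (FreeMonoid.toList v).count k) :
    ∃ X : Plactic n, X * Plactic.mk n u = X * Plactic.mk n v := by
  have hperm : u.toList.Perm v.toList := List.perm_iff_count.2 h
  set N := u.toList.length + 1
  have hv : v.toList.length < N := by rw [← hperm.length_eq]; omega
  refine ⟨Plactic.ofList (Plactic.fatTableau N [] n), ?_⟩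
  rw [← Plactic.ofList_toList, ← Plactic.ofList_toList, ← Plactic.ofList_append,
    ← Plactic.ofList_append, Plactic.ofList_fatTableau_nil_append (by omega),
    Plactic.ofList_fatTableau_nil_append hv, Plactic.fatTableau_eq_of_perm hperm]
end

section
/- In the plactic monoid P_n, for any i ∈ {1,…,n−1}, inserting i into a product f_1^{x_1}⋯f_n^{x_n} of the column generators with x_{i+1} ≥ 1 yields f_1^{x_1}⋯f_i^{x_i+1}f_{i+1}^{x_{i+1}−1}⋯f_n^{x_n}. -/
/-- The column word `f_i = n (n-1) ⋯ i`: the strictly decreasing word of all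
letters from `n` down to `i`. -/
def colWord (n : ℕ) (i : Fin n) : FreeMonoid (Fin n) :=
  FreeMonoid.ofList (((List.finRange n).filter (fun j => i ≤ j)).reverse)

/-- The column element `f_i` of the plactic monoid. -/
def colElt (n : ℕ) (i : Fin n) : Plactic n := Plactic.mk n (colWord n i)

/-- The ordered product `f_1^{x_1} f_2^{x_2} ⋯ f_n^{x_n}` of powers of the
column elements. -/
def colProd (n : ℕ) (x : Fin n → ℕ) : Plactic n :=
  ((List.finRange n).map (fun j => colElt n j ^ x j)).prod

namespace PlacticAux

open FreeMonoid List

variable {n : ℕ}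

/-- single Knuth relation gives equality in the plactic monoid -/
lemma mk_eq_of_rel {a b : FreeMonoid (Fin n)} (hab : KnuthRel n a b) :
    Plactic.mk n a = Plactic.mk n b := by
  apply Con.eq (conGen (KnuthRel n)) |>.mpr
  exact ConGen.Rel.of _ _ hab

lemma rel2 (x y z : Fin n) (h1 : x < y) (h2 : y ≤ z) :
    Plactic.mk n (of y * of x * of z) = Plactic.mk n (of y * of z * of x) :=
  mk_eq_of_rel (Or.inr ⟨x, y, z, h1, h2, rfl, rfl⟩)

/-- shorthand -/
def P (n : ℕ) (l : List (Fin n)) : Plactic n := Plactic.mk n (FreeMonoid.ofList l)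

lemma P_append (l₁ l₂ : List (Fin n)) : P n (l₁ ++ l₂) = P n l₁ * P n l₂ := by
  unfold P
  rw [← map_mul]
  rfl

lemma P_cons (a : Fin n) (l : List (Fin n)) : P n (a :: l) = P n [a] * P n l := by
  simpa using P_append [a] l

/-- Move a large letter right through a strictly decreasing list with an anchor `y ≤ z`. -/
lemma moveR (z : Fin n) : ∀ (l : List (Fin n)) (y : Fin n),
    List.Chain' (· > ·) (y :: l) → y ≤ z →
    P n (y :: z :: l) = P n ((y :: l) ++ [z])
  | [], _, _, _ => rfl
  | d :: t, y, hc, hyz => by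
    have hdy : y > d := (List.isChain_cons_cons.mp hc).1
    have hct : List.Chain' (· > ·) (d :: t) := (List.isChain_cons_cons.mp hc).2
    have step : P n [y, z, d] = P n [y, d, z] := by
      have := rel2 d y z hdy hyz
      unfold P
      simpa [mul_assoc] using this.symm
    have ih := moveR z t d hct (le_of_lt (lt_of_lt_of_le hdy hyz))
    calc P n (y :: z :: d :: t) = P n [y, z, d] * P n t := by
          simpa using P_append [y, z, d] t
      _ = P n [y, d, z] * P n t := by rw [step]
      _ = P n [y] * (P n (d :: z :: t)) := by
          rw [← P_append, ← P_append]; simp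
      _ = P n [y] * P n ((d :: t) ++ [z]) := by rw [ih]
      _ = P n ((y :: d :: t) ++ [z]) := by rw [← P_append]; simp

end PlacticAux

namespace PlacticAux

variable {n : ℕ}

instance : IsTrans (Fin n) (· > ·) := ⟨fun _ _ _ h1 h2 => lt_trans h2 h1⟩

lemma P_nil : P n ([] : List (Fin n)) = 1 := rfl

lemma P_cons' (a : Fin n) (l : List (Fin n)) :
    P n (a :: l) = Plactic.mk n (FreeMonoid.of a) * P n l := by
  rw [P_cons]; rfl

/-- Key lemma: inserting `a` below a column `u` in presence of a prefix column `v`. -/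
lemma Lstar : ∀ (u v : List (Fin n)) (a : Fin n),
    v <+: u → List.Chain' (· > ·) (u ++ [a]) →
    P n (u ++ v ++ [a]) = P n (u ++ [a] ++ v)
  | u, [], a, _, _ => by simp
  | u, m :: v', a, hpre, hc => by
    obtain ⟨t, ht⟩ := hpre
    have hu : u = m :: (v' ++ t) := ht.symm
    subst hu
    set d := v' ++ t with hd
    have hcu : List.Chain' (· > ·) (m :: d) :=
      List.IsChain.sublist hc (by simpa using List.sublist_append_left (m :: d) [a])
    have hcda : List.Chain' (· > ·) (d ++ [a]) := by
      have := hc.tail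
      simp at this; exact this
    have hpre' : v' <+: d := ⟨t, rfl⟩
    have mr1 : P n (m :: d ++ [m]) = P n (m :: m :: d) := (moveR m d m hcu le_rfl).symm
    have hcua : List.Chain' (· > ·) (m :: (d ++ [a])) := by simpa using hc
    have mr2 : P n (m :: m :: (d ++ [a])) = P n (m :: (d ++ [a]) ++ [m]) :=
      moveR m (d ++ [a]) m hcua le_rfl
    have s2 : P n (d ++ v' ++ [a]) = P n (d ++ [a] ++ v') :=
      Lstar d v' a hpre' hcda
    have h1 := congrArg (fun q => q * P n (v' ++ [a])) mr1
    have h2 := congrArg (fun q => q * P n v') mr2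
    have h3 := congrArg (fun q => Plactic.mk n (FreeMonoid.of m) * (Plactic.mk n (FreeMonoid.of m) * q)) s2
    simp only [P_append, P_cons', P_nil, mul_assoc, mul_one, one_mul,
      List.append_assoc, List.cons_append, List.nil_append] at h1 h2 h3 ⊢
    rw [h1, h3, h2]
  termination_by u v a => v.length
  decreasing_by simp

/-- Column-type words commute: if `v` is a prefix of the strictly decreasing `u`. -/
lemma commList (u : List (Fin n)) : ∀ (v : List (Fin n)), v <+: u → List.Chain' (· > ·) u →
    P n u * P n v = P n v * P n u := by
  induction u using List.reverseRecOn with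
  | nil => intro v hv _; rw [List.prefix_nil.mp hv]
  | append_singleton u' a ih =>
    intro v hv hc
    by_cases hveq : v = u' ++ [a]
    · rw [hveq]
    · have hlt : v.length < (u' ++ [a]).length :=
        lt_of_le_of_ne hv.length_le (fun hh => hveq (List.IsPrefix.eq_of_length hv hh))
      have hv' : v <+: u' := by
        apply List.prefix_of_prefix_length_le hv (List.prefix_append u' [a])
        simp at hlt ⊢; omega
      have hcu' : List.Chain' (· > ·) u' :=
        List.IsChain.sublist hc (List.sublist_append_left u' [a])
      have ihuv := ih v hv' hcu'
      calc P n (u' ++ [a]) * P n v = P n (u' ++ [a] ++ v) := by rw [← P_append]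
        _ = P n (u' ++ v ++ [a]) := (Lstar u' v a hv' hc).symm
        _ = P n u' * P n v * P n [a] := by rw [P_append, P_append]
        _ = P n v * P n u' * P n [a] := by rw [ihuv]
        _ = P n v * P n (u' ++ [a]) := by rw [P_append, mul_assoc]

end PlacticAux

namespace PlacticAux

variable {n : ℕ}

lemma filter_range_nat (i : ℕ) : ∀ N : ℕ,
    (List.range N).filter (fun k => decide (i ≤ k)) = List.range' i (N - i)
  | 0 => by simp
  | N + 1 => by
    rw [List.range_succ, List.filter_append, filter_range_nat i N]
    by_cases hiN : i ≤ N
    · have h1 : List.filter (fun k => decide (i ≤ k)) [N] = [N] := by simp [hiN]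
      rw [h1]
      have h2 : N + 1 - i = (N - i) + 1 := by omega
      rw [h2, List.range'_concat]
      congr 2
      omega
    · have h1 : List.filter (fun k => decide (i ≤ k)) [N] = [] := by simp [hiN]
      rw [h1]
      have h2 : N - i = 0 := by omega
      have h3 : N + 1 - i = 0 := by omega
      simp [h2, h3]

def wl (n : ℕ) (i : Fin n) : List (Fin n) :=
  ((List.finRange n).filter (fun j => i ≤ j)).reverse

lemma colWord_eq (i : Fin n) : colWord n i = FreeMonoid.ofList (wl n i) := rfl

lemma colElt_eq (i : Fin n) : colElt n i = P n (wl n i) := rfl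

lemma wl_map_val (i : Fin n) :
    (wl n i).map Fin.val = (List.range' i.val (n - i.val)).reverse := by
  unfold wl
  rw [List.map_reverse]
  congr 1
  have h1 : ((List.finRange n).filter (fun j => i ≤ j)).map Fin.val
      = ((List.finRange n).map Fin.val).filter (fun k => decide (i.val ≤ k)) := by
    rw [List.filter_map]
    rfl
  rw [h1, List.map_coe_finRange_eq_range, filter_range_nat]

lemma wl_chain (i : Fin n) : List.Chain' (· > ·) (wl n i) := by
  have h : List.Chain' (· > ·) ((wl n i).map Fin.val) := by
    rw [wl_map_val]
    show List.IsChain _ _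
    rw [List.isChain_reverse]
    exact (List.pairwise_lt_range' (s := _) (n := _)).isChain.imp (fun a b hab => hab)
  unfold List.Chain' at h ⊢
  rw [List.isChain_map] at h
  exact h.imp (fun a b hab => hab)

lemma prefix_of_map {α β : Type*} {f : α → β} (hf : Function.Injective f)
    {l₁ l₂ : List α} (h : l₁.map f <+: l₂.map f) : l₁ <+: l₂ := by
  rw [List.prefix_iff_eq_take] at h ⊢
  apply List.map_injective_iff.mpr hf
  rw [h, List.map_take, List.length_map]

lemma wl_prefix {a b : Fin n} (hab : a ≤ b) : wl n b <+: wl n a := by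
  apply prefix_of_map Fin.val_injective
  rw [wl_map_val, wl_map_val]
  apply List.IsSuffix.reverse
  refine ⟨List.range' a.val (b.val - a.val), ?_⟩
  have hb : a.val + (b.val - a.val) = b.val := by omega
  have h := List.range'_append_1 (s := a.val) (m := b.val - a.val) (n := n - b.val)
  rw [hb] at h
  rw [h]
  congr 1
  have := b.isLt
  omega

lemma wl_step (i : Fin n) (h : i.val + 1 < n) :
    wl n (⟨i.val + 1, h⟩ : Fin n) ++ [i] = wl n i := by
  apply List.map_injective_iff.mpr Fin.val_injective
  rw [List.map_append, wl_map_val, wl_map_val]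
  have h2 : n - i.val = (n - (i.val + 1)) + 1 := by omega
  rw [h2, List.range'_succ]
  simp

lemma colWord_mul_of (i : Fin n) (h : i.val + 1 < n) :
    colWord n (⟨i.val + 1, h⟩ : Fin n) * FreeMonoid.of i = colWord n i := by
  rw [colWord_eq, colWord_eq, ← FreeMonoid.ofList_singleton, ← FreeMonoid.ofList_append,
    wl_step]

lemma colElt_comm (a b : Fin n) : colElt n a * colElt n b = colElt n b * colElt n a := by
  rcases le_total a b with hab | hab
  · exact commList (wl n a) (wl n b) (wl_prefix hab) (wl_chain a)
  · exact (commList (wl n b) (wl n a) (wl_prefix hab) (wl_chain b)).symm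

end PlacticAux

namespace PlacticAux

variable {n : ℕ}

lemma extract : ∀ (l : List (Fin n)) (g : Fin n → Plactic n) (k : Fin n) (c : Plactic n),
    l.Nodup → k ∈ l → (∀ j : Fin n, c * g j = g j * c) →
    (l.map (fun j => g j * (if j = k then c else 1))).prod = (l.map g).prod * c
  | [], _, _, _, _, hk, _ => absurd hk List.not_mem_nil
  | j :: t, g, k, c, hnd, hk, hcomm => by
    have hnd1 : j ∉ t := (List.nodup_cons.mp hnd).1
    have hnd2 : t.Nodup := (List.nodup_cons.mp hnd).2
    by_cases hj : j = k
    · subst hj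
      have hmap : t.map (fun x => g x * (if x = j then c else 1)) = t.map g := by
        apply List.map_congr_left
        intro a ha
        have : a ≠ j := fun hh => hnd1 (hh ▸ ha)
        simp [this]
      have hcprod : c * (t.map g).prod = (t.map g).prod * c := by
        have : Commute c (t.map g).prod := by
          apply Commute.list_prod_right
          intro y hy
          obtain ⟨a, _, rfl⟩ := List.mem_map.mp hy
          exact hcomm a
        exact this
      simp only [List.map_cons, List.prod_cons, hmap]
      rw [if_true, mul_assoc, hcprod, ← mul_assoc]
    · have hkt : k ∈ t := by
        rcases List.mem_cons.mp hk with h' | h'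
        · exact absurd h'.symm hj
        · exact h'
      have ih := extract t g k c hnd2 hkt hcomm
      simp only [List.map_cons, List.prod_cons, if_neg hj, mul_one, ih, mul_assoc]

lemma colProd_mul_colElt (y : Fin n → ℕ) (k : Fin n) :
    colProd n (Function.update y k (y k + 1)) = colProd n y * colElt n k := by
  unfold colProd
  have hmap : (List.finRange n).map (fun j => colElt n j ^ (Function.update y k (y k + 1)) j)
      = (List.finRange n).map
          (fun j => (colElt n j ^ y j) * (if j = k then colElt n k else 1)) := by
    apply List.map_congr_left
    intro j _
    by_cases hj : j = k
    · subst hj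
      rw [Function.update_self, if_pos rfl, pow_succ]
    · rw [Function.update_of_ne hj, if_neg hj, mul_one]
  rw [hmap]
  apply extract
  · exact List.nodup_finRange n
  · exact List.mem_finRange k
  · intro j
    exact (Commute.pow_right (colElt_comm k j) (y j))

end PlacticAux

/-- Inserting the generator `i` into `f_1^{x_1} ⋯ f_n^{x_n}` with `x_{i+1} ≥ 1`
increases the exponent of `f_i` by one and decreases the exponent of `f_{i+1}`
by one. -/
theorem plactic_colProd_insert (n : ℕ) (x : Fin n → ℕ) (i : Fin n)
    (h : (i : ℕ) + 1 < n) (hx : 1 ≤ x ⟨(i : ℕ) + 1, h⟩) :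
    colProd n x * Plactic.mk n (FreeMonoid.of i) =
      colProd n (Function.update (Function.update x i (x i + 1))
        ⟨(i : ℕ) + 1, h⟩ (x ⟨(i : ℕ) + 1, h⟩ - 1)) := by
  classical
  set k1 : Fin n := ⟨(i : ℕ) + 1, h⟩ with hk1
  have hik1 : i ≠ k1 := by
    intro hh
    have := congrArg Fin.val hh
    simp [hk1] at this
  set y : Fin n → ℕ := Function.update x k1 (x k1 - 1) with hy
  have hxy : x = Function.update y k1 (y k1 + 1) := by
    funext j
    by_cases hj : j = k1
    · subst hj
      simp [hy, Function.update_self]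
      omega
    · simp [hy, Function.update_of_ne hj]
  have hx' : Function.update (Function.update x i (x i + 1)) k1 (x k1 - 1)
      = Function.update y i (y i + 1) := by
    rw [hy]
    rw [Function.update_comm hik1.symm, Function.update_of_ne hik1]
  have step1 : colProd n x = colProd n y * colElt n k1 := by
    rw [hxy]; exact PlacticAux.colProd_mul_colElt y k1
  have step2 : colElt n k1 * Plactic.mk n (FreeMonoid.of i) = colElt n i := by
    unfold colElt
    rw [← map_mul]
    congr 1
    exact PlacticAux.colWord_mul_of i h
  rw [step1, hx', mul_assoc, step2, PlacticAux.colProd_mul_colElt]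
end

section
/- Every plactic monoid of finite rank n is left reversible: for all u, v ∈ P_n there exist X, Y ∈ P_n with uX = vY. -/
/-!
Let `c_h` be the column `(h-1)(h-2)⋯0` and call `c_n^{k_n} ⋯ c_1^{k_1}` a staircase. A letter `x`
completes a column of height `x` to one of height `x + 1`, `x · c_x = c_{x+1}`, and the Knuth
relations let it commute with every taller column. So a word `a` multiplied on the left of a
staircase that contains one `c_x` for each letter `x` of `a` trades these for one `c_{x+1}` each.
Given `a` and `b`, the staircase built from the columns consumed by `a` and produced by `b`, and
the one built symmetrically, give `a X = b Y`: both equal the staircase of the columns produced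
by `a` and by `b`.
-/

namespace Plactic

variable {n : ℕ}

theorem mk_surjective : Function.Surjective (Plactic.mk n) :=
  Con.mk'_surjective

def letter (x : Fin n) : Plactic n := Plactic.mk n (FreeMonoid.of x)

theorem knuth_left {x y z : Fin n} (hxy : x ≤ y) (hyz : y < z) :
    letter x * letter z * letter y = letter z * letter x * letter y := by
  have h : Plactic.mk n (.of x * .of z * .of y) = Plactic.mk n (.of z * .of x * .of y) :=
    (Con.eq _).mpr (ConGen.Rel.of _ _ (Or.inl ⟨x, y, z, hxy, hyz, rfl, rfl⟩))
  simpa only [map_mul, letter] using h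

theorem knuth_right {x y z : Fin n} (hxy : x < y) (hyz : y ≤ z) :
    letter y * letter x * letter z = letter y * letter z * letter x := by
  have h : Plactic.mk n (.of y * .of x * .of z) = Plactic.mk n (.of y * .of z * .of x) :=
    (Con.eq _).mpr (ConGen.Rel.of _ _ (Or.inr ⟨x, y, z, hxy, hyz, rfl, rfl⟩))
  simpa only [map_mul, letter] using h

/-- The decreasing word `(h-1)(h-2)⋯0`, truncated to the letters below `n`. -/
def column : ℕ → Plactic n
  | 0 => 1
  | k + 1 => (if h : k < n then letter ⟨k, h⟩ else 1) * column k

theorem column_succ {k : ℕ} (hk : k < n) : column (k + 1) = letter ⟨k, hk⟩ * column k :=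
  congrArg (· * column k) (dif_pos hk)

theorem letter_mul_column (x : Fin n) : letter x * column x = column (x + 1) :=
  (column_succ x.isLt).symm

theorem letter_mul_letter_mul_column (z : Fin n) {k : ℕ} (hk : k ≤ z) :
    letter ⟨k, hk.trans_lt z.isLt⟩ * letter z * column k = column (k + 1) * letter z := by
  induction k with
  | zero => rw [column_succ (hk.trans_lt z.isLt)]; simp only [column, mul_one]
  | succ k ih =>
    have hk₀ : k < n := by omega
    have hk₁ : k + 1 < n := by omega
    calc letter ⟨k + 1, hk₁⟩ * letter z * column (k + 1)
        = letter ⟨k + 1, hk₁⟩ * letter z * letter ⟨k, hk₀⟩ * column k := by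
          rw [column_succ hk₀, ← mul_assoc]
      _ = letter ⟨k + 1, hk₁⟩ * (letter ⟨k, hk₀⟩ * letter z * column k) := by
          rw [← knuth_right (Fin.mk_lt_mk.mpr k.lt_succ_self) hk]
          simp only [mul_assoc]
      _ = column (k + 1 + 1) * letter z := by
          rw [ih (by omega), ← mul_assoc, ← column_succ hk₁]

theorem commute_letter_column (x : Fin n) {h : ℕ} (hhn : h ≤ n) (hxh : x < h) :
    Commute (letter x) (column h) := by
  induction h with
  | zero => omega
  | succ h ih =>
    obtain hxh | rfl := Nat.lt_succ_iff_lt_or_eq.mp hxh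
    · obtain ⟨k, rfl⟩ : ∃ k, h = k + 1 := ⟨h - 1, by omega⟩
      have hk₀ : k < n := by omega
      have hk₁ : k + 1 < n := by omega
      have hswap := knuth_left (x := x) (y := ⟨k, hk₀⟩) (z := ⟨k + 1, hk₁⟩)
        (Fin.mk_le_mk.mpr (by omega)) (Fin.mk_lt_mk.mpr k.lt_succ_self)
      calc letter x * column (k + 1 + 1)
          = letter ⟨k + 1, hk₁⟩ * (letter x * column (k + 1)) := by
            rw [column_succ hk₁, column_succ hk₀]
            simp only [← mul_assoc]
            rw [hswap]
        _ = column (k + 1 + 1) * letter x := by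
            rw [(ih (by omega) hxh).eq, ← mul_assoc, ← column_succ hk₁]
    · calc letter x * column (x + 1)
          = letter x * letter x * column x := by rw [column_succ x.isLt, mul_assoc]
        _ = column (x + 1) * letter x := letter_mul_letter_mul_column x le_rfl

def staircase (k : ℕ → ℕ) : ℕ → Plactic n
  | 0 => 1
  | m + 1 => column (m + 1) ^ k (m + 1) * staircase k m

theorem staircase_congr {k₁ k₂ : ℕ → ℕ} {m : ℕ} (h : ∀ i, 0 < i → i ≤ m → k₁ i = k₂ i) :
    (staircase k₁ m : Plactic n) = staircase k₂ m := by
  induction m with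
  | zero => rfl
  | succ m ih =>
    simp only [staircase, h (m + 1) m.succ_pos le_rfl, ih fun i hi him => h i hi (by omega)]

theorem staircase_add_single_self (k : ℕ → ℕ) (m : ℕ) :
    (staircase (k + Pi.single m 1) m : Plactic n) = column m * staircase k m := by
  cases m with
  | zero => simp [staircase, column]
  | succ m =>
    have hbelow : (staircase (k + Pi.single (m + 1) 1) m : Plactic n) = staircase k m :=
      staircase_congr fun i _ him => by simp [show i ≠ m + 1 by omega]
    simp only [staircase, hbelow, Pi.add_apply, Pi.single_eq_same, pow_succ', mul_assoc]

theorem letter_mul_staircase (x : Fin n) (k : ℕ → ℕ) {m : ℕ} (hxm : x < m) (hmn : m ≤ n) :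
    letter x * staircase (k + Pi.single (x : ℕ) 1) m =
      staircase (k + Pi.single (x + 1 : ℕ) 1) m := by
  induction m, hxm using Nat.le_induction with
  | base =>
    have htop : (k + Pi.single (x : ℕ) 1 : ℕ → ℕ) (x + 1) = k (x + 1) := by simp
    have hcomm := (commute_letter_column x hmn (Nat.lt_succ_self x)).pow_right (k (x + 1))
    calc letter x * staircase (k + Pi.single (x : ℕ) 1) (x + 1)
        = letter x * (column (x + 1) ^ k (x + 1) * (column x * staircase k x)) := by
          rw [staircase, staircase_add_single_self, htop]
      _ = column (x + 1) ^ k (x + 1) * (letter x * column x * staircase k x) := by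
          rw [← mul_assoc, hcomm.eq]
          simp only [mul_assoc]
      _ = column (x + 1) * staircase k (x + 1) := by
          rw [letter_mul_column, staircase, ← mul_assoc, ← mul_assoc, ← pow_succ, ← pow_succ']
      _ = staircase (k + Pi.single (x + 1 : ℕ) 1) (x + 1) :=
          (staircase_add_single_self k (x + 1)).symm
  | succ m hxm ih =>
    have htop (v : ℕ) (hv : v < m + 1) : (k + Pi.single v 1 : ℕ → ℕ) (m + 1) = k (m + 1) := by
      simp [show m + 1 ≠ v by omega]
    simp only [staircase]
    rw [htop _ (by omega), htop _ (by omega), ← mul_assoc,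
      ((commute_letter_column x hmn (by omega)).pow_right _).eq, mul_assoc, ih (by omega)]

def consumedHeights (a : FreeMonoid (Fin n)) : ℕ → ℕ :=
  (a.toList.map fun x : Fin n => (Pi.single (x : ℕ) 1 : ℕ → ℕ)).sum

def producedHeights (a : FreeMonoid (Fin n)) : ℕ → ℕ :=
  (a.toList.map fun x : Fin n => (Pi.single (x + 1 : ℕ) 1 : ℕ → ℕ)).sum

theorem mk_mul_staircase (a : FreeMonoid (Fin n)) (k : ℕ → ℕ) :
    Plactic.mk n a * staircase (k + consumedHeights a) n =
      staircase (k + producedHeights a) n := by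
  induction a using FreeMonoid.inductionOn' generalizing k with
  | one => simp [consumedHeights, producedHeights]
  | of_mul x a ih =>
    simp only [consumedHeights, producedHeights, FreeMonoid.toList_of_mul, List.map_cons,
      List.sum_cons] at ih ⊢
    rw [map_mul, mul_assoc, ← add_assoc, ih, add_right_comm,
      show Plactic.mk n (.of x) = letter x from rfl, letter_mul_staircase x _ x.isLt le_rfl,
      add_right_comm, add_assoc]

end Plactic

/-- The plactic monoid of any finite rank is left reversible: any two
principal right ideals intersect. -/
theorem plactic_left_reversible (n : ℕ) (u v : Plactic n) :
    ∃ X Y : Plactic n, u * X = v * Y := by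
  obtain ⟨a, rfl⟩ := Plactic.mk_surjective u
  obtain ⟨b, rfl⟩ := Plactic.mk_surjective v
  refine ⟨Plactic.staircase (Plactic.producedHeights b + Plactic.consumedHeights a) n,
    Plactic.staircase (Plactic.producedHeights a + Plactic.consumedHeights b) n, ?_⟩
  rw [Plactic.mk_mul_staircase, Plactic.mk_mul_staircase, add_comm]
end

section
/- The infinite rank plactic monoid P_ℕ is left and right reversible: for all u, v ∈ P_ℕ there exist X, Y with uX = vY, and there exist X', Y' with X'u = Y'v. -/
/-- The Knuth relations on words over the alphabet `ℕ`:
`xzy = zxy` for `x ≤ y < z` and `yxz = yzx` for `x < y ≤ z`. -/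
def KnuthRelNat : FreeMonoid ℕ → FreeMonoid ℕ → Prop := fun a b =>
  (∃ x y z : ℕ, x ≤ y ∧ y < z ∧
      a = FreeMonoid.of x * FreeMonoid.of z * FreeMonoid.of y ∧
      b = FreeMonoid.of z * FreeMonoid.of x * FreeMonoid.of y) ∨
  (∃ x y z : ℕ, x < y ∧ y ≤ z ∧
      a = FreeMonoid.of y * FreeMonoid.of x * FreeMonoid.of z ∧
      b = FreeMonoid.of y * FreeMonoid.of z * FreeMonoid.of x)

/-- The plactic monoid of infinite rank, presented by generators `ℕ` and all
Knuth relations. -/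
def PlacticNat := (conGen KnuthRelNat).Quotient

instance : Monoid PlacticNat := inferInstanceAs (Monoid (conGen KnuthRelNat).Quotient)

/-- The canonical projection from the free monoid on `ℕ` to `PlacticNat`. -/
def PlacticNat.mk : FreeMonoid ℕ →* PlacticNat := Con.mk' _

/-!
Call a strictly decreasing word a column. By the Knuth relations a letter commutes with every
column containing it, so nested columns commute. For letters `< n`, the columns
`c l = (l - 1) ⋯ 1 0` (`l ≤ n`) therefore commute pairwise and satisfy `x · c x = c (x + 1)`;
hence for `Y = c 0 ⋯ c n` each letter `x < n` satisfies `x · Y ^ m · w = Y ^ (m + 1)` for some `w`.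
This property propagates, with `m + k` in place of `m + 1`, to the submonoid generated by the
letters `< n`, so any two of its elements left-divide powers of `Y`, which have a common multiple.
Left reversibility is the mirror image, with the columns `(n - 1) ⋯ i` and
`((n - 1) ⋯ (x + 1)) · x = (n - 1) ⋯ x`.
-/

section Monoid

variable {M : Type*} [Monoid M]

theorem mul_pow_mul_eq_pow_succ {x c c' y y' : M} (hx : x * c = c') (hc : Commute c y)
    (hc' : Commute c' y) (hy : c' * y' = y) (m : ℕ) : x * y ^ m * (c * y') = y ^ (m + 1) :=
  calc x * y ^ m * (c * y') = x * c * y ^ m * y' := by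
        simp only [mul_assoc, (hc.pow_right m).left_comm]
    _ = y ^ m * (c' * y') := by rw [hx, (hc'.pow_right m).eq, mul_assoc]
    _ = y ^ (m + 1) := by rw [hy, pow_succ]

theorem mul_pow_mul_eq_pow_succ' {x c c' y y' : M} (hx : c * x = c') (hc : Commute c y)
    (hc' : Commute c' y) (hy : y' * c' = y) (m : ℕ) : y' * c * y ^ m * x = y ^ (m + 1) :=
  calc y' * c * y ^ m * x = y' * y ^ m * (c * x) := by
        rw [mul_assoc y', (hc.pow_right m).eq]; simp only [mul_assoc]
    _ = (y' * c') * y ^ m := by rw [hx, mul_assoc, ← (hc'.pow_right m).eq, mul_assoc]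
    _ = y ^ (m + 1) := by rw [hy, pow_succ']

theorem List.exists_commute_mul_eq_prod_of_mem {l : List M} {a : M} (ha : a ∈ l)
    (hl : ∀ x ∈ l, ∀ y ∈ l, Commute x y) : ∃ r, Commute a r ∧ a * r = l.prod := by
  classical
  exact ⟨(l.erase a).prod,
    Commute.list_prod_right _ _ fun x hx => hl a ha x (List.mem_of_mem_erase hx),
    List.prod_erase_of_comm ha fun x hx y hy => (hl x hx y hy).eq⟩

theorem exists_mul_pow_mul_eq_pow_add_of_mem_closure {s : Set M} {y : M}
    (hs : ∀ x ∈ s, ∀ m : ℕ, ∃ w, x * y ^ m * w = y ^ (m + 1)) {a : M}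
    (ha : a ∈ Submonoid.closure s) : ∃ k : ℕ, ∀ m : ℕ, ∃ w, a * y ^ m * w = y ^ (m + k) := by
  induction ha using Submonoid.closure_induction with
  | mem x hx => exact ⟨1, hs x hx⟩
  | one => exact ⟨0, fun m => ⟨1, by simp⟩⟩
  | mul a b _ _ iha ihb =>
    obtain ⟨ka, hka⟩ := iha
    obtain ⟨kb, hkb⟩ := ihb
    refine ⟨kb + ka, fun m => ?_⟩
    obtain ⟨wb, hwb⟩ := hkb m
    obtain ⟨wa, hwa⟩ := hka (m + kb)
    exact ⟨wb * wa, by rw [← add_assoc, ← hwa, ← hwb]; simp only [mul_assoc]⟩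

theorem exists_mul_pow_mul_eq_pow_add_of_mem_closure' {s : Set M} {y : M}
    (hs : ∀ x ∈ s, ∀ m : ℕ, ∃ w, w * y ^ m * x = y ^ (m + 1)) {a : M}
    (ha : a ∈ Submonoid.closure s) : ∃ k : ℕ, ∀ m : ℕ, ∃ w, w * y ^ m * a = y ^ (m + k) := by
  have hs_op : ∀ x ∈ MulOpposite.unop ⁻¹' s, ∀ m : ℕ,
      ∃ w, x * MulOpposite.op y ^ m * w = MulOpposite.op y ^ (m + 1) := by
    intro x hx m
    obtain ⟨w, hw⟩ := hs x.unop hx m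
    exact ⟨MulOpposite.op w, MulOpposite.unop_injective (by simpa [mul_assoc] using hw)⟩
  have ha_op : MulOpposite.op a ∈ Submonoid.closure (MulOpposite.unop ⁻¹' s) := by
    rwa [← Submonoid.op_closure]
  obtain ⟨k, hk⟩ := exists_mul_pow_mul_eq_pow_add_of_mem_closure hs_op ha_op
  refine ⟨k, fun m => ?_⟩
  obtain ⟨w, hw⟩ := hk m
  exact ⟨w.unop, MulOpposite.op_injective (by simpa [mul_assoc] using hw)⟩

theorem exists_mul_eq_mul_of_mem_closure {s : Set M} {y : M}
    (hs : ∀ x ∈ s, ∀ m : ℕ, ∃ w, x * y ^ m * w = y ^ (m + 1)) {a b : M}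
    (ha : a ∈ Submonoid.closure s) (hb : b ∈ Submonoid.closure s) : ∃ X Y : M, a * X = b * Y := by
  obtain ⟨ka, hka⟩ := exists_mul_pow_mul_eq_pow_add_of_mem_closure hs ha
  obtain ⟨kb, hkb⟩ := exists_mul_pow_mul_eq_pow_add_of_mem_closure hs hb
  obtain ⟨wa, hwa⟩ := hka kb
  obtain ⟨wb, hwb⟩ := hkb ka
  exact ⟨y ^ kb * wa, y ^ ka * wb, by rw [← mul_assoc, ← mul_assoc, hwa, hwb, add_comm]⟩

theorem exists_mul_eq_mul_of_mem_closure' {s : Set M} {y : M}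
    (hs : ∀ x ∈ s, ∀ m : ℕ, ∃ w, w * y ^ m * x = y ^ (m + 1)) {a b : M}
    (ha : a ∈ Submonoid.closure s) (hb : b ∈ Submonoid.closure s) : ∃ X Y : M, X * a = Y * b := by
  obtain ⟨ka, hka⟩ := exists_mul_pow_mul_eq_pow_add_of_mem_closure' hs ha
  obtain ⟨kb, hkb⟩ := exists_mul_pow_mul_eq_pow_add_of_mem_closure' hs hb
  obtain ⟨wa, hwa⟩ := hka kb
  obtain ⟨wb, hwb⟩ := hkb ka
  exact ⟨wa * y ^ kb, wb * y ^ ka, by rw [hwa, hwb, add_comm]⟩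

end Monoid

namespace PlacticNat

def gen (x : ℕ) : PlacticNat := mk (FreeMonoid.of x)

theorem mk_eq_of_knuthRelNat {a b : FreeMonoid ℕ} (h : KnuthRelNat a b) : mk a = mk b :=
  (conGen KnuthRelNat).eq.mpr (ConGen.Rel.of a b h)

theorem gen_mul_gen_mul_gen_of_le_of_lt {x y z : ℕ} (hxy : x ≤ y) (hyz : y < z) :
    gen x * gen z * gen y = gen z * gen x * gen y := by
  simpa only [gen, map_mul] using mk_eq_of_knuthRelNat (Or.inl ⟨x, y, z, hxy, hyz, rfl, rfl⟩)

theorem gen_mul_gen_mul_gen_of_lt_of_le {x y z : ℕ} (hxy : x < y) (hyz : y ≤ z) :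
    gen y * gen x * gen z = gen y * gen z * gen x := by
  simpa only [gen, map_mul] using mk_eq_of_knuthRelNat (Or.inr ⟨x, y, z, hxy, hyz, rfl, rfl⟩)

theorem mk_surjective : Function.Surjective mk := Con.mk'_surjective

theorem mk_eq_prod_map_gen (w : FreeMonoid ℕ) : mk w = (w.toList.map gen).prod := by
  rw [← FreeMonoid.lift_apply gen w]
  exact DFunLike.congr_fun (FreeMonoid.hom_eq (f := mk) (g := FreeMonoid.lift gen) fun _ => rfl) w

theorem eventually_mem_closure_gen (u : PlacticNat) :
    ∀ᶠ n in Filter.atTop, u ∈ Submonoid.closure (gen '' Set.Iio n) := by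
  obtain ⟨w, rfl⟩ := mk_surjective u
  have hbound : ∀ᶠ n in Filter.atTop, ∀ a ∈ w.toList, a < n :=
    (List.finite_toSet _).eventually_all.2 fun a _ => Filter.eventually_gt_atTop a
  filter_upwards [hbound] with n hn
  rw [mk_eq_prod_map_gen]
  exact Submonoid.list_prod_mem _
    (List.forall_mem_map.2 fun a ha => Submonoid.subset_closure ⟨a, hn a ha, rfl⟩)

/-- `column i l` is the strictly decreasing word `(i + l - 1) ⋯ (i + 1) i`. -/
def column (i : ℕ) : ℕ → PlacticNat
  | 0 => 1
  | l + 1 => gen (i + l) * column i l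

@[simp]
theorem column_zero (i : ℕ) : column i 0 = 1 := rfl

theorem column_succ (i l : ℕ) : column i (l + 1) = gen (i + l) * column i l := rfl

theorem column_add (i l₁ l₂ : ℕ) : column i (l₁ + l₂) = column (i + l₁) l₂ * column i l₁ := by
  induction l₂ with
  | zero => simp
  | succ l₂ ih => rw [← add_assoc, column_succ, ih, column_succ, add_assoc, mul_assoc]

theorem column_succ_eq_mul_gen (i l : ℕ) : column i (l + 1) = column (i + 1) l * gen i := by
  rw [add_comm, column_add, column_succ, column_zero, add_zero, mul_one]

theorem gen_mul_column_succ {x i : ℕ} (hx : x ≤ i) (l : ℕ) :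
    gen x * column i (l + 1) = column (i + 1) l * gen x * gen i := by
  induction l with
  | zero => simp [column_succ]
  | succ l ih =>
    calc gen x * column i (l + 2) = gen x * gen (i + (l + 1)) * gen (i + l) * column i l := by
          simp only [column_succ, mul_assoc]
      _ = gen (i + (l + 1)) * (gen x * column i (l + 1)) := by
          rw [gen_mul_gen_mul_gen_of_le_of_lt (by omega) (by omega), column_succ]
          simp only [mul_assoc]
      _ = column (i + 1) (l + 1) * gen x * gen i := by
          rw [ih, column_succ, show i + 1 + l = i + (l + 1) by omega]
          simp only [mul_assoc]

theorem column_succ_mul_gen {i l z : ℕ} (hz : i + l ≤ z) :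
    column i (l + 1) * gen z = gen (i + l) * gen z * column i l := by
  induction l with
  | zero => simp [column_succ]
  | succ l ih =>
    calc column i (l + 2) * gen z = gen (i + (l + 1)) * (column i (l + 1) * gen z) := by
          rw [column_succ i (l + 1), mul_assoc]
      _ = gen (i + (l + 1)) * gen z * column i (l + 1) := by
          rw [ih (by omega), ← mul_assoc, ← mul_assoc,
            gen_mul_gen_mul_gen_of_lt_of_le (by omega) hz, column_succ]
          simp only [mul_assoc]

theorem commute_gen_column {x i l : ℕ} (hix : i ≤ x) (hxl : x < i + l) :
    Commute (gen x) (column i l) := by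
  obtain ⟨l₁, rfl⟩ : ∃ l₁, x = i + l₁ := ⟨x - i, by omega⟩
  obtain ⟨l₂, rfl⟩ : ∃ l₂, l = l₁ + (l₂ + 1) := ⟨l - l₁ - 1, by omega⟩
  have hbottom : column i (l₁ + 1) * gen (i + l₁) = gen (i + l₁) * column i (l₁ + 1) := by
    rw [column_succ_mul_gen le_rfl, column_succ, mul_assoc]
  -- Split the column at `x`: the first Knuth relation moves `x` through the letters above it,
  -- the second through the letters below it.
  calc gen (i + l₁) * column i (l₁ + (l₂ + 1))
      = gen (i + l₁) * column (i + l₁) (l₂ + 1) * column i l₁ := by rw [column_add, mul_assoc]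
    _ = column (i + l₁ + 1) l₂ * (gen (i + l₁) * column i (l₁ + 1)) := by
      rw [gen_mul_column_succ le_rfl, column_succ i l₁]
      simp only [mul_assoc]
    _ = column i (l₁ + (l₂ + 1)) * gen (i + l₁) := by
      rw [← hbottom, show l₁ + (l₂ + 1) = l₁ + 1 + l₂ by omega, column_add i (l₁ + 1),
        ← add_assoc, mul_assoc]

theorem commute_column_column {i l i' l' : ℕ} (hi : i ≤ i') (hl : i' + l' ≤ i + l) :
    Commute (column i' l') (column i l) := by
  induction l' with
  | zero => exact Commute.one_left _
  | succ l' ih =>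
    rw [column_succ]
    exact (commute_gen_column (by omega) (by omega)).mul_left (ih (by omega))

theorem commute_column_zero (l l' : ℕ) : Commute (column 0 l) (column 0 l') := by
  rcases le_total l l' with h | h
  · exact commute_column_column le_rfl (by omega)
  · exact (commute_column_column le_rfl (by omega)).symm

theorem commute_column_sub {n i i' : ℕ} (hi : i ≤ n) (hi' : i' ≤ n) :
    Commute (column i (n - i)) (column i' (n - i')) := by
  rcases le_total i i' with h | h
  · exact (commute_column_column h (by omega)).symm
  · exact commute_column_column h (by omega)

def bottomColumns (n : ℕ) : PlacticNat := ((List.range (n + 1)).map (column 0)).prod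

def topColumns (n : ℕ) : PlacticNat := ((List.range (n + 1)).map fun i => column i (n - i)).prod

theorem exists_gen_mul_bottomColumns_pow_mul_eq {x n : ℕ} (hx : x < n) (m : ℕ) :
    ∃ w, gen x * bottomColumns n ^ m * w = bottomColumns n ^ (m + 1) := by
  have hcomm : ∀ l, Commute (column 0 l) (bottomColumns n) := fun l =>
    Commute.list_prod_right _ _ (List.forall_mem_map.2 fun l' _ => commute_column_zero l l')
  obtain ⟨r, -, hr⟩ := List.exists_commute_mul_eq_prod_of_mem
    (List.mem_map_of_mem (f := column 0) (List.mem_range.2 (by omega : x + 1 < n + 1)))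
    (by simp only [List.forall_mem_map]; exact fun l _ l' _ => commute_column_zero l l')
  exact ⟨_, mul_pow_mul_eq_pow_succ (by rw [column_succ, zero_add]) (hcomm x) (hcomm (x + 1))
    hr m⟩

theorem exists_mul_topColumns_pow_mul_gen_eq {x n : ℕ} (hx : x < n) (m : ℕ) :
    ∃ w, w * topColumns n ^ m * gen x = topColumns n ^ (m + 1) := by
  have hcomm : ∀ i ≤ n, Commute (column i (n - i)) (topColumns n) := fun i hi =>
    Commute.list_prod_right _ _ (List.forall_mem_map.2 fun i' hi' =>
      commute_column_sub hi (Nat.lt_succ_iff.1 (List.mem_range.1 hi')))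
  obtain ⟨r, hcr, hr⟩ := List.exists_commute_mul_eq_prod_of_mem
    (List.mem_map_of_mem (f := fun i => column i (n - i)) (List.mem_range.2 (by omega : x < n + 1)))
    (by
      simp only [List.forall_mem_map, List.mem_range]
      exact fun i hi i' hi' => commute_column_sub (by omega) (by omega))
  refine ⟨_, mul_pow_mul_eq_pow_succ' ?_ (hcomm (x + 1) hx) (hcomm x hx.le) (hcr.eq ▸ hr) m⟩
  rw [← column_succ_eq_mul_gen, show n - (x + 1) + 1 = n - x by omega]

end PlacticNat

/-- The infinite rank plactic monoid is both left and right reversible. -/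
theorem placticNat_left_and_right_reversible (u v : PlacticNat) :
    (∃ X Y : PlacticNat, u * X = v * Y) ∧ (∃ X' Y' : PlacticNat, X' * u = Y' * v) := by
  obtain ⟨n, hu, hv⟩ :=
    ((PlacticNat.eventually_mem_closure_gen u).and (PlacticNat.eventually_mem_closure_gen v)).exists
  exact ⟨exists_mul_eq_mul_of_mem_closure (Set.forall_mem_image.2 fun _ hx =>
      PlacticNat.exists_gen_mul_bottomColumns_pow_mul_eq hx) hu hv,
    exists_mul_eq_mul_of_mem_closure' (Set.forall_mem_image.2 fun _ hx =>
      PlacticNat.exists_mul_topColumns_pow_mul_gen_eq hx) hu hv⟩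
end

section
/- Strictly decreasing words over {1,…,n} (columns) represent pairwise distinct elements of the plactic monoid: two strictly decreasing words are Knuth-equivalent only if they are equal. -/
/-
Each Knuth relation swaps two adjacent letters, so Knuth-equivalent words have the same
multiset of letters. A strictly decreasing word is the decreasing arrangement of its letters,
hence is determined by that multiset.
-/

namespace FreeMonoid

variable {α : Type*}

def content : FreeMonoid α →* Multiplicative (Multiset α) where
  toFun w := Multiplicative.ofAdd (w.toList : Multiset α)
  map_one' := rfl
  map_mul' a b := by simp only [toList_mul, ← Multiset.coe_add, ofAdd_add]

theorem content_eq_content_iff {a b : FreeMonoid α} :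
    content a = content b ↔ a.toList.Perm b.toList :=
  Multiplicative.ofAdd.injective.eq_iff.trans Multiset.coe_eq_coe

theorem perm_toList_of_conGen {r : FreeMonoid α → FreeMonoid α → Prop}
    (hr : ∀ a b, r a b → a.toList.Perm b.toList) {a b : FreeMonoid α} (h : conGen r a b) :
    a.toList.Perm b.toList := by
  have hle : conGen r ≤ Con.ker content :=
    Con.conGen_le.mpr fun a b hab => content_eq_content_iff.mpr (hr a b hab)
  exact content_eq_content_iff.mp (hle h)

end FreeMonoid

theorem KnuthRel.perm_toList {n : ℕ} {a b : FreeMonoid (Fin n)} (h : KnuthRel n a b) :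
    a.toList.Perm b.toList := by
  rcases h with ⟨x, y, z, -, -, rfl, rfl⟩ | ⟨x, y, z, -, -, rfl, rfl⟩
  · exact .swap z x [y]
  · exact .cons y (.swap z x [])

/-- Two strictly decreasing words (columns) over `{1,…,n}` are Knuth-equivalent
only if they are equal. -/
theorem plactic_columns_distinct (n : ℕ) (a b : FreeMonoid (Fin n))
    (ha : (FreeMonoid.toList a).Chain' (· > ·))
    (hb : (FreeMonoid.toList b).Chain' (· > ·))
    (h : conGen (KnuthRel n) a b) : a = b := by
  have hperm := FreeMonoid.perm_toList_of_conGen (fun _ _ => KnuthRel.perm_toList) h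
  exact FreeMonoid.toList.injective <|
    hperm.eq_of_sortedGE ha.sortedGT.sortedGE hb.sortedGT.sortedGE
end
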